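/- arXiv:2211.09181 — 3 statements merged into one kernel-verified Lean document; each statement's English description precedes it below -/
import Mathlib

section
/- For every real number c > 0 and every integer α ≥ 2, the Cauchy principal value PV ∫₀^∞ e^{−u/c}/(1 − u^α) du exists (i.e. the limit as ε → 0⁺ of ∫₀^{1−ε} e^{−u/c}/(1 − u^α) du + ∫_{1+ε}^∞ e^{−u/c}/(1 − u^α) du exists as a finite real number) and is strictly positive. -/
/-!
Substituting `u = 1/v` on `(1 + ε, ∞)` turns the integral of `f u = e^{-u/c}/(1 - u^α)` there
into `-∫_0^{1/(1+ε)} q` with `q v = e^{-1/(vc)} v^{α-2}/(1 - v^α)`, so the truncated integral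
equals `∫_0^{1-ε} (f - q) - ∫_{1-ε}^{1/(1+ε)} q`. The simple poles of `f` and `q` at `v = 1`
cancel, so `f - q` is bounded on `(0, 1)`, and it is positive there because `v < 1/v` and
`v^{α-2} ≤ 1`. The last integral runs over an interval of length `ε²/(1+ε)` on which
`0 ≤ q ≤ (1+ε)/ε`, so it is at most `ε`. Hence the principal value is `∫_0^1 (f - q) > 0`.
-/

open MeasureTheory Filter Set Topology

theorem integral_Ioi_inv_eq {E : Type*} [NormedAddCommGroup E] [NormedSpace ℝ E] (g : ℝ → E)
    {b : ℝ} (hb : 0 < b) : ∫ u in Ioi b⁻¹, g u = ∫ v in Ioo 0 b, (v ^ 2)⁻¹ • g v⁻¹ := by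
  rw [← inv_Ioo_0_left hb, ← image_inv_eq_inv,
    integral_image_eq_integral_abs_deriv_smul measurableSet_Ioo
      (fun v hv => (hasDerivAt_inv hv.1.ne').hasDerivWithinAt) (fun _ _ _ _ h => inv_injective h) g]
  refine setIntegral_congr_fun measurableSet_Ioo fun v _ => ?_
  simp [abs_neg]

theorem Real.exp_sub_exp_le_sub {a b : ℝ} (hba : b ≤ a) (ha : a ≤ 0) :
    Real.exp a - Real.exp b ≤ a - b := by
  have h1 : Real.exp a * (b - a + 1) ≤ Real.exp b := by
    rw [show Real.exp b = Real.exp a * Real.exp (b - a) by rw [← Real.exp_add]; ring_nf]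
    exact mul_le_mul_of_nonneg_left (Real.add_one_le_exp _) (Real.exp_pos a).le
  have h2 : Real.exp a ≤ 1 := Real.exp_le_one_iff.2 ha
  nlinarith

theorem one_sub_le_inv_one_add {ε : ℝ} (hε : -1 < ε) : 1 - ε ≤ (1 + ε)⁻¹ := by
  rw [← one_div, le_div_iff₀ (by linarith)]
  nlinarith [sq_nonneg ε]

namespace ExpDivOneSubPow

noncomputable def integrand (c : ℝ) (α : ℕ) (u : ℝ) : ℝ := Real.exp (-u / c) / (1 - u ^ α)

noncomputable def invIntegrand (c : ℝ) (α : ℕ) (v : ℝ) : ℝ :=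
  Real.exp (-v⁻¹ / c) * v ^ (α - 2) / (1 - v ^ α)

variable {c : ℝ} {α : ℕ} {v : ℝ}

theorem exp_neg_div_le_one (hc : 0 < c) {x : ℝ} (hx : 0 ≤ x) : Real.exp (-x / c) ≤ 1 :=
  Real.exp_le_one_iff.2 (div_nonpos_of_nonpos_of_nonneg (neg_nonpos.2 hx) hc.le)

theorem one_sub_pow_pos (hα : α ≠ 0) (hv : v ∈ Ioo (0 : ℝ) 1) : 0 < 1 - v ^ α :=
  sub_pos.2 (pow_lt_one₀ hv.1.le hv.2 hα)

theorem one_sub_le_one_sub_pow (hα : α ≠ 0) (hv : v ∈ Ioo (0 : ℝ) 1) : 1 - v ≤ 1 - v ^ α :=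
  sub_le_sub_left (pow_le_of_le_one hv.1.le hv.2.le hα) 1

theorem inv_sq_smul_integrand_inv (hα : 2 ≤ α) (hv : v ∈ Ioo 0 1) :
    (v ^ 2)⁻¹ • integrand c α v⁻¹ = -invIntegrand c α v := by
  obtain ⟨k, rfl⟩ := Nat.exists_eq_add_of_le' hα
  have h1 : 1 - v ^ (k + 2) ≠ 0 := (one_sub_pow_pos (by omega) hv).ne'
  have h0 : v ≠ 0 := hv.1.ne'
  simp only [integrand, invIntegrand, smul_eq_mul, Nat.add_sub_cancel, inv_pow]
  rw [show 1 - (v ^ (k + 2))⁻¹ = -(1 - v ^ (k + 2)) / v ^ (k + 2) by field_simp; ring]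
  field_simp
  ring

theorem integrand_le (hc : 0 < c) (hα : α ≠ 0) (hv : v ∈ Ioo 0 1) :
    integrand c α v ≤ (1 - v)⁻¹ := by
  rw [← one_div]
  exact div_le_div₀ zero_le_one (exp_neg_div_le_one hc hv.1.le) (sub_pos.2 hv.2)
    (one_sub_le_one_sub_pow hα hv)

theorem invIntegrand_nonneg (hα : α ≠ 0) (hv : v ∈ Ioo 0 1) : 0 ≤ invIntegrand c α v :=
  div_nonneg (mul_nonneg (Real.exp_pos _).le (pow_nonneg hv.1.le _)) (one_sub_pow_pos hα hv).le

theorem invIntegrand_le (hc : 0 < c) (hα : α ≠ 0) (hv : v ∈ Ioo 0 1) :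
    invIntegrand c α v ≤ (1 - v)⁻¹ := by
  rw [← one_div]
  exact div_le_div₀ zero_le_one (mul_le_one₀ (exp_neg_div_le_one hc (inv_pos.2 hv.1).le)
    (pow_nonneg hv.1.le _)
    (pow_le_one₀ hv.1.le hv.2.le)) (sub_pos.2 hv.2) (one_sub_le_one_sub_pow hα hv)

theorem integrand_sub_invIntegrand_pos (hc : 0 < c) (hα : α ≠ 0) (hv : v ∈ Ioo 0 1) :
    0 < integrand c α v - invIntegrand c α v := by
  have hvinv : v < v⁻¹ := hv.2.trans (one_lt_inv₀ hv.1 |>.2 hv.2)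
  have hexp : Real.exp (-v⁻¹ / c) < Real.exp (-v / c) :=
    Real.exp_lt_exp.2 (div_lt_div_of_pos_right (neg_lt_neg hvinv) hc)
  have hnum : Real.exp (-v⁻¹ / c) * v ^ (α - 2) < Real.exp (-v / c) :=
    (mul_le_of_le_one_right (Real.exp_pos _).le (pow_le_one₀ hv.1.le hv.2.le)).trans_lt hexp
  exact sub_pos.2 (div_lt_div_of_pos_right hnum (one_sub_pow_pos hα hv))

theorem integrand_sub_invIntegrand_le (hc : 0 < c) (hα : 2 ≤ α) (hv : v ∈ Ioo 0 1) :
    integrand c α v - invIntegrand c α v ≤ 2 + 2 / c := by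
  have h2c : 0 ≤ 2 / c := by positivity
  have hα0 : α ≠ 0 := by omega
  rcases le_or_gt v (1 / 2) with hv2 | hv2
  · have hf := integrand_le hc hα0 hv
    have hq := invIntegrand_nonneg (c := c) hα0 hv
    have : (1 - v)⁻¹ ≤ 2 := by
      rw [inv_le_comm₀ (sub_pos.2 hv.2) two_pos]
      linarith
    linarith
  · -- Near `v = 1` the poles cancel because `e^{-v/c} - e^{-1/(vc)} ≤ (1/v - v)/c`.
    obtain ⟨k, rfl⟩ := Nat.exists_eq_add_of_le' hα
    have hD := one_sub_pow_pos hα0 hv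
    rw [integrand, invIntegrand, Nat.add_sub_cancel, ← sub_div, div_le_iff₀ hD]
    have hvinv : v ≤ v⁻¹ := hv.2.le.trans (one_le_inv₀ hv.1 |>.2 hv.2.le)
    have hexp := Real.exp_sub_exp_le_sub (a := -v / c) (b := -v⁻¹ / c)
      (div_le_div_of_nonneg_right (neg_le_neg hvinv) hc.le)
      (div_nonpos_of_nonpos_of_nonneg (neg_nonpos.2 hv.1.le) hc.le)
    have hE := exp_neg_div_le_one hc (inv_pos.2 hv.1).le
    have hp : v ^ k ≤ 1 := pow_le_one₀ hv.1.le hv.2.le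
    have hinv_le_two : v⁻¹ ≤ 2 := by
      rw [inv_le_comm₀ hv.1 two_pos]
      linarith
    have hvv : v⁻¹ - v ≤ 2 * (1 - v ^ (k + 2)) :=
      calc v⁻¹ - v = (1 - v ^ 2) * v⁻¹ := by field_simp
        _ ≤ (1 - v ^ 2) * 2 := by gcongr; nlinarith [hv.2]
        _ ≤ 2 * (1 - v ^ (k + 2)) := by
          nlinarith [pow_le_pow_of_le_one hv.1.le hv.2.le (show 2 ≤ k + 2 by omega)]
    have hpk : 1 - v ^ k ≤ 1 - v ^ (k + 2) := by
      nlinarith [pow_le_pow_of_le_one hv.1.le hv.2.le (show k ≤ k + 2 by omega)]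
    calc Real.exp (-v / c) - Real.exp (-v⁻¹ / c) * v ^ k
        = (Real.exp (-v / c) - Real.exp (-v⁻¹ / c)) + Real.exp (-v⁻¹ / c) * (1 - v ^ k) := by ring
      _ ≤ (v⁻¹ - v) / c + 1 * (1 - v ^ (k + 2)) := by
          gcongr
          exact hexp.trans_eq (by ring)
      _ ≤ 2 * (1 - v ^ (k + 2)) / c + 2 * (1 - v ^ (k + 2)) := by gcongr; linarith
      _ = (2 + 2 / c) * (1 - v ^ (k + 2)) := by ring

theorem continuousOn_integrand (hα : α ≠ 0) {b : ℝ} (hb : b < 1) :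
    ContinuousOn (integrand c α) (Icc 0 b) :=
  ContinuousOn.div (by fun_prop) (by fun_prop) fun u hu =>
    (sub_pos.2 (pow_lt_one₀ hu.1 (hu.2.trans_lt hb) hα)).ne'

theorem intervalIntegrable_integrand_sub_invIntegrand (hc : 0 < c) (hα : 2 ≤ α) :
    IntervalIntegrable (fun v => integrand c α v - invIntegrand c α v) volume 0 1 := by
  rw [intervalIntegrable_iff_integrableOn_Ioo_of_le zero_le_one]
  have hmeas : Measurable fun v => integrand c α v - invIntegrand c α v := by
    unfold integrand invIntegrand; fun_prop
  refine IntegrableOn.of_bound measure_Ioo_lt_top hmeas.aestronglyMeasurable (2 + 2 / c) ?_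
  filter_upwards [ae_restrict_mem measurableSet_Ioo] with v hv
  rw [Real.norm_eq_abs, abs_of_pos (integrand_sub_invIntegrand_pos hc (by omega) hv)]
  exact integrand_sub_invIntegrand_le hc hα hv

theorem integral_add_integral_Ioi_eq (hc : 0 < c) (hα : 2 ≤ α) {ε : ℝ} (hε : ε ∈ Ioo 0 1) :
    (∫ u in (0 : ℝ)..(1 - ε), integrand c α u) + ∫ u in Ioi (1 + ε), integrand c α u =
      (∫ v in (0 : ℝ)..(1 - ε), integrand c α v - invIntegrand c α v) -
        ∫ v in (1 - ε)..(1 + ε)⁻¹, invIntegrand c α v := by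
  set b := (1 + ε)⁻¹ with hb
  have hε1 : 0 < 1 + ε := by linarith [hε.1]
  have hb0 : 0 < b := inv_pos.2 hε1
  have hb1 : b < 1 := inv_lt_one_of_one_lt₀ (by linarith [hε.1])
  have hεb : 1 - ε ≤ b := one_sub_le_inv_one_add (by linarith)
  have hf : IntervalIntegrable (integrand c α) volume 0 b :=
    (continuousOn_integrand (by omega) hb1).intervalIntegrable_of_Icc hb0.le
  have hfq : IntervalIntegrable (fun v => integrand c α v - invIntegrand c α v) volume 0 b :=
    (intervalIntegrable_integrand_sub_invIntegrand hc hα).mono_set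
      (uIcc_subset_uIcc left_mem_uIcc (by rw [uIcc_of_le zero_le_one]; exact ⟨hb0.le, hb1.le⟩))
  have hq : IntervalIntegrable (invIntegrand c α) volume 0 b := by
    simpa using hf.sub hfq
  have htail : ∫ u in Ioi (1 + ε), integrand c α u = -∫ v in (0 : ℝ)..b, invIntegrand c α v := by
    rw [show 1 + ε = b⁻¹ by rw [hb, inv_inv], integral_Ioi_inv_eq _ hb0,
      intervalIntegral.integral_of_le hb0.le, integral_Ioc_eq_integral_Ioo, ← integral_neg]
    exact setIntegral_congr_fun measurableSet_Ioo fun v hv =>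
      inv_sq_smul_integrand_inv hα ⟨hv.1, hv.2.trans hb1⟩
  have h0 : (0 : ℝ) ∈ uIcc 0 b := left_mem_uIcc
  have h1 : 1 - ε ∈ uIcc 0 b := by rw [uIcc_of_le hb0.le]; exact ⟨by linarith [hε.2], hεb⟩
  rw [htail, ← intervalIntegral.integral_add_adjacent_intervals
    (hq.mono_set (uIcc_subset_uIcc h0 h1)) (hq.mono_set (uIcc_subset_uIcc h1 right_mem_uIcc)),
    intervalIntegral.integral_sub (hf.mono_set (uIcc_subset_uIcc h0 h1))
    (hq.mono_set (uIcc_subset_uIcc h0 h1))]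
  ring

theorem abs_integral_invIntegrand_le (hc : 0 < c) (hα : α ≠ 0) {ε : ℝ} (hε : ε ∈ Ioo 0 1) :
    |∫ v in (1 - ε)..(1 + ε)⁻¹, invIntegrand c α v| ≤ ε := by
  have hε1 : 0 < 1 + ε := by linarith [hε.1]
  have hεb : 1 - ε ≤ (1 + ε)⁻¹ := one_sub_le_inv_one_add (by linarith)
  have hb1 : (1 + ε)⁻¹ < 1 := inv_lt_one_of_one_lt₀ (by linarith [hε.1])
  have hbound : ∀ v ∈ uIoc (1 - ε) (1 + ε)⁻¹, ‖invIntegrand c α v‖ ≤ (1 + ε) / ε := by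
    rw [uIoc_of_le hεb]
    rintro v ⟨hv1, hv2⟩
    have hv : v ∈ Ioo 0 1 := ⟨by linarith [hε.2], hv2.trans_lt hb1⟩
    rw [Real.norm_eq_abs, abs_of_nonneg (invIntegrand_nonneg hα hv)]
    calc invIntegrand c α v ≤ (1 - v)⁻¹ := invIntegrand_le hc hα hv
      _ ≤ (ε / (1 + ε))⁻¹ := by
          refine inv_anti₀ (by have := hε.1; positivity) ?_
          have : (1 + ε)⁻¹ = 1 - ε / (1 + ε) := by field_simp; ring
          linarith
      _ = (1 + ε) / ε := inv_div _ _
  calc |∫ v in (1 - ε)..(1 + ε)⁻¹, invIntegrand c α v|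
      ≤ (1 + ε) / ε * |(1 + ε)⁻¹ - (1 - ε)| :=
        intervalIntegral.norm_integral_le_of_norm_le_const hbound
    _ = ε := by
        have hε0 := hε.1.ne'
        rw [abs_of_nonneg (sub_nonneg.2 hεb)]
        field_simp
        ring

end ExpDivOneSubPow

open ExpDivOneSubPow in
/-- For every real `c > 0` and every integer `α ≥ 2`, the Cauchy principal value
`PV ∫₀^∞ e^{−u/c}/(1 − u^α) du` exists (the limit as `ε → 0⁺` of
`∫₀^{1−ε} + ∫_{1+ε}^∞` exists as a finite real number) and is strictly positive. -/
theorem pv_integral_exp_div_one_sub_pow_exists_pos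
    (c : ℝ) (hc : 0 < c) (α : ℕ) (hα : 2 ≤ α) :
    ∃ L : ℝ, 0 < L ∧
      Tendsto (fun ε : ℝ =>
          (∫ u in (0:ℝ)..(1 - ε), Real.exp (-u / c) / (1 - u ^ α)) +
            ∫ u in Set.Ioi (1 + ε), Real.exp (-u / c) / (1 - u ^ α))
        (nhdsWithin 0 (Set.Ioi 0)) (nhds L) := by
  set F : ℝ → ℝ := fun x => ∫ v in (0 : ℝ)..x, integrand c α v - invIntegrand c α v
  have hint := intervalIntegrable_integrand_sub_invIntegrand hc hα
  refine ⟨F 1, intervalIntegral.intervalIntegral_pos_of_pos_on hint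
    (fun v hv => integrand_sub_invIntegrand_pos hc (by omega) hv) one_pos, ?_⟩
  have hF : Tendsto (fun ε => F (1 - ε)) (𝓝[>] 0) (𝓝 (F 1)) := by
    have hcont : ContinuousWithinAt F (Icc 0 1) 1 := by
      simpa using intervalIntegral.continuousOn_primitive_interval' hint left_mem_uIcc 1
        (by simp)
    refine hcont.tendsto.comp (tendsto_nhdsWithin_iff.2 ⟨?_, ?_⟩)
    · exact ((continuous_sub_left 1).tendsto' 0 1 (sub_zero 1)).mono_left nhdsWithin_le_nhds
    · filter_upwards [Ioo_mem_nhdsGT one_pos] with ε hε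
      exact ⟨by linarith [hε.2], by linarith [hε.1]⟩
  have hR : Tendsto (fun ε => ∫ v in (1 - ε)..(1 + ε)⁻¹, invIntegrand c α v) (𝓝[>] 0) (𝓝 0) := by
    refine squeeze_zero_norm' ?_ (tendsto_nhdsWithin_of_tendsto_nhds tendsto_id)
    filter_upwards [Ioo_mem_nhdsGT one_pos] with ε hε
    exact abs_integral_invIntegrand_le hc (by omega) hε
  have hlim := hF.sub hR
  rw [sub_zero] at hlim
  refine hlim.congr' ?_
  filter_upwards [Ioo_mem_nhdsGT one_pos] with ε hε
  exact (integral_add_integral_Ioi_eq hc hα hε).symm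
end

section
/- Fix a real number c > 0 and an integer α ≥ 2. Then the Lebesgue integral ∫₀^∞ (e^{−u/c} − e^{−1/c})/(1 − u^α) du is strictly positive. -/
/-!
Numerator and denominator have the sign of `1 - u` on `[0, ∞)`, so the integrand is nonnegative,
and strictly positive on `(0, 1)`. It is integrable: near `u = 1` the numerator is `O(|1 - u|)`
because `exp` is `1`-Lipschitz on `(-∞, 0]`, while `|1 - u| ≤ |1 - u ^ α|`; at infinity it is
`O(u⁻²)` because `α ≥ 2`.
-/

open MeasureTheory Set Real

lemma abs_one_sub_le_abs_one_sub_pow {u : ℝ} (hu : 0 ≤ u) {n : ℕ} (hn : n ≠ 0) :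
    |1 - u| ≤ |1 - u ^ n| := by
  have hsum : 1 ≤ ∑ i ∈ Finset.range n, u ^ i :=
    (pow_zero u).symm.le.trans <| Finset.single_le_sum (fun i _ => pow_nonneg hu i)
      (Finset.mem_range.mpr (Nat.pos_of_ne_zero hn))
  calc |1 - u| = 1 * |u - 1| := by rw [one_mul, abs_sub_comm]
    _ ≤ |∑ i ∈ Finset.range n, u ^ i| * |u - 1| := by
        gcongr
        exact hsum.trans (le_abs_self _)
    _ = |1 - u ^ n| := by rw [← abs_mul, geom_sum_mul, abs_sub_comm]

lemma abs_exp_sub_exp_le_of_nonpos {a b : ℝ} (ha : a ≤ 0) (hb : b ≤ 0) :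
    |exp a - exp b| ≤ |a - b| := by
  wlog hab : a ≤ b generalizing a b
  · rw [abs_sub_comm, abs_sub_comm a]
    exact this hb ha (le_of_not_ge hab)
  rw [abs_of_nonpos (sub_nonpos.mpr (exp_le_exp.mpr hab)), abs_of_nonpos (by linarith)]
  have hdiff : 1 - exp (a - b) ≤ b - a := by
    have := one_sub_le_exp_neg (b - a)
    rw [neg_sub] at this
    linarith
  calc -(exp a - exp b) = exp b * (1 - exp (a - b)) := by rw [exp_sub]; field_simp; ring
    _ ≤ 1 * (b - a) := by
        gcongr
        · linarith [exp_le_one_iff.mpr (show a - b ≤ 0 by linarith)]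
        · exact exp_le_one_iff.mpr hb
    _ = -(a - b) := by ring

noncomputable def expRatio (c : ℝ) (α : ℕ) (u : ℝ) : ℝ :=
  (exp (-u / c) - exp (-1 / c)) / (1 - u ^ α)

section expRatio

variable {c : ℝ} {α : ℕ} {u : ℝ}

lemma measurable_expRatio : Measurable (expRatio c α) := by
  unfold expRatio
  fun_prop

lemma expRatio_nonneg (hc : 0 < c) (hu : 0 ≤ u) : 0 ≤ expRatio c α u := by
  rcases le_total u 1 with h | h
  · refine div_nonneg (sub_nonneg.mpr <| exp_le_exp.mpr ?_) (sub_nonneg.mpr (pow_le_one₀ hu h))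
    gcongr
  · refine div_nonneg_of_nonpos (sub_nonpos.mpr <| exp_le_exp.mpr ?_)
      (sub_nonpos.mpr (one_le_pow₀ h))
    gcongr

lemma expRatio_pos (hc : 0 < c) (hα : α ≠ 0) (hu₀ : 0 ≤ u) (hu₁ : u < 1) :
    0 < expRatio c α u := by
  refine div_pos (sub_pos.mpr <| exp_lt_exp.mpr ?_) (sub_pos.mpr (pow_lt_one₀ hu₀ hu₁ hα))
  gcongr

lemma abs_expRatio_le_inv (hc : 0 < c) (hα : α ≠ 0) (hu : 0 ≤ u) : |expRatio c α u| ≤ c⁻¹ := by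
  rcases eq_or_ne u 1 with rfl | hu₁
  · simp [expRatio, hc.le]
  have hden : 0 < |1 - u| := abs_pos.mpr (sub_ne_zero.mpr (Ne.symm hu₁))
  have hnum : |exp (-u / c) - exp (-1 / c)| ≤ |1 - u| / c := by
    calc |exp (-u / c) - exp (-1 / c)| ≤ |-u / c - -1 / c| :=
          abs_exp_sub_exp_le_of_nonpos (div_nonpos_of_nonpos_of_nonneg (neg_nonpos.mpr hu) hc.le)
            (div_nonpos_of_nonpos_of_nonneg (by norm_num) hc.le)
      _ = |1 - u| / c := by rw [div_sub_div_same, abs_div, abs_of_pos hc, neg_sub_neg]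
  calc |expRatio c α u| = |exp (-u / c) - exp (-1 / c)| / |1 - u ^ α| := abs_div _ _
    _ ≤ |1 - u| / c / |1 - u| :=
        div_le_div₀ (by positivity) hnum hden (abs_one_sub_le_abs_one_sub_pow hu hα)
    _ = c⁻¹ := by field_simp

lemma expRatio_le_inv_sq_sub_one (hc : 0 < c) (hα : 2 ≤ α) (hu : 2 ≤ u) :
    expRatio c α u ≤ (u ^ 2 - 1)⁻¹ := by
  have hpow : u ^ 2 ≤ u ^ α := pow_le_pow_right₀ (by linarith) hα
  have hnum : exp (-1 / c) - exp (-u / c) ≤ 1 := by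
    have : exp (-1 / c) ≤ 1 := exp_le_one_iff.mpr (div_nonpos_of_nonpos_of_nonneg (by norm_num) hc.le)
    linarith [exp_pos (-u / c)]
  calc expRatio c α u = (exp (-1 / c) - exp (-u / c)) / (u ^ α - 1) := by
        rw [expRatio, ← neg_sub, ← neg_sub (u ^ α), neg_div_neg_eq]
    _ ≤ 1 / (u ^ 2 - 1) := div_le_div₀ zero_le_one hnum (by nlinarith) (by linarith)
    _ = (u ^ 2 - 1)⁻¹ := one_div _

lemma expRatio_le_div_one_add_sq (hc : 0 < c) (hα : 2 ≤ α) (hu : 0 ≤ u) :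
    expRatio c α u ≤ 5 * (c⁻¹ + 1) * (1 + u ^ 2)⁻¹ := by
  have hsq : 0 < 1 + u ^ 2 := by positivity
  rcases le_total u 2 with h | h
  · calc expRatio c α u ≤ c⁻¹ := (le_abs_self _).trans (abs_expRatio_le_inv hc (by omega) hu)
      _ ≤ 5 * (c⁻¹ + 1) * (1 + u ^ 2)⁻¹ := by
        rw [← div_eq_mul_inv, le_div_iff₀ hsq]
        have hu2 : u ^ 2 ≤ 4 := by nlinarith
        nlinarith [inv_pos.mpr hc, mul_le_mul_of_nonneg_left hu2 (inv_pos.mpr hc).le]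
  · calc expRatio c α u ≤ (u ^ 2 - 1)⁻¹ := expRatio_le_inv_sq_sub_one hc hα h
      _ ≤ 5 * (1 + u ^ 2)⁻¹ := by
        rw [inv_eq_one_div, ← div_eq_mul_inv, div_le_div_iff₀ (by nlinarith) hsq]
        nlinarith
      _ ≤ 5 * (c⁻¹ + 1) * (1 + u ^ 2)⁻¹ := by
        gcongr
        linarith [inv_pos.mpr hc]

lemma integrableOn_expRatio_Ioi (hc : 0 < c) (hα : 2 ≤ α) : IntegrableOn (expRatio c α) (Ioi 0) :=
  (integrable_inv_one_add_sq.const_mul (5 * (c⁻¹ + 1))).integrableOn.mono'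
    measurable_expRatio.aestronglyMeasurable.restrict <| by
      filter_upwards [ae_restrict_mem measurableSet_Ioi] with u hu
      rw [norm_of_nonneg (expRatio_nonneg hc (le_of_lt hu))]
      exact expRatio_le_div_one_add_sq hc hα (le_of_lt hu)

end expRatio

/-- Fix a real `c > 0` and an integer `α ≥ 2`. Then the Lebesgue integral
`∫₀^∞ (e^{−u/c} − e^{−1/c})/(1 − u^α) du` is strictly positive. -/
theorem integral_exp_sub_exp_div_one_sub_pow_pos
    (c : ℝ) (hc : 0 < c) (α : ℕ) (hα : 2 ≤ α) :
    0 < ∫ u in Set.Ioi (0:ℝ), (Real.exp (-u / c) - Real.exp (-1 / c)) / (1 - u ^ α) := by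
  change 0 < ∫ u in Ioi 0, expRatio c α u
  have hnonneg : 0 ≤ᵐ[volume.restrict (Ioi 0)] expRatio c α := by
    filter_upwards [ae_restrict_mem measurableSet_Ioi] with u hu
    exact expRatio_nonneg hc (le_of_lt hu)
  rw [setIntegral_pos_iff_support_of_nonneg_ae hnonneg (integrableOn_expRatio_Ioi hc hα)]
  calc (0 : ENNReal) < volume (Ioo (0 : ℝ) 1) := by simp
    _ ≤ volume (Function.support (expRatio c α) ∩ Ioi 0) :=
        measure_mono fun u hu => ⟨(expRatio_pos hc (by omega) hu.1.le hu.2).ne', hu.1⟩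
end

section
/- Let H_n denote the physicists' Hermite polynomials, defined by H_0 = 1, H_1(x) = 2x, and H_{n+1}(x) = 2x·H_n(x) − 2n·H_{n−1}(x) for n ≥ 1. Then for all natural numbers m and n, H_m(x)·H_n(x) = Σ_{k=0}^{min(m,n)} 2^k · k! · C(m,k) · C(n,k) · H_{m+n−2k}(x), as an identity of polynomials (equivalently, for every real x), where C(m,k) denotes the binomial coefficient. -/
/-!
Induction on `m` along the three-term recurrence. Writing `H_{m+2} H_n = 2x H_{m+1} H_n −
2(m+1) H_m H_n`, expanding both products by the formula and applying
`2x H_j = H_{j+1} + 2j H_{j-1}` term by term, the formula for `m + 2` reduces to a Pascal-type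
identity between the coefficients `2^k k! C(m,k) C(n,k)` at `m`, `m + 1` and `m + 2`, which in
turn follows from `(k+1) C(N,k+1) = (N−k) C(N,k)`.
-/

open Finset

/-- The physicists' Hermite polynomials (as real functions), defined by
`H_0 = 1`, `H_1(x) = 2x`, `H_{n+1}(x) = 2x·H_n(x) − 2n·H_{n−1}(x)`. -/
noncomputable def physHermite : ℕ → ℝ → ℝ
  | 0 => fun _ => 1
  | 1 => fun x => 2 * x
  | (n + 2) => fun x =>
      2 * x * physHermite (n + 1) x - 2 * (n + 1) * physHermite n x

theorem Nat.cast_choose_succ_right_eq {R : Type*} [Ring R] (n k : ℕ) :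
    (n.choose (k + 1) : R) * (k + 1) = n.choose k * (n - k) := by
  rcases le_or_gt k n with hk | hk
  · have h := congrArg (Nat.cast : ℕ → R) (Nat.choose_succ_right_eq n k)
    push_cast [hk] at h
    exact h
  · simp [Nat.choose_eq_zero_of_lt hk, Nat.choose_eq_zero_of_lt (Nat.lt_succ_of_lt hk)]

theorem physHermite_add_two (n : ℕ) (x : ℝ) :
    physHermite (n + 2) x = 2 * x * physHermite (n + 1) x - 2 * (n + 1) * physHermite n x :=
  rfl

-- For `n = 0` the truncated index `n - 1` is harmless: its coefficient vanishes.
theorem two_mul_mul_physHermite (n : ℕ) (x : ℝ) :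
    2 * x * physHermite n x = physHermite (n + 1) x + 2 * n * physHermite (n - 1) x := by
  cases n with
  | zero => simp [physHermite]
  | succ n => rw [physHermite_add_two]; push_cast; ring

noncomputable def hermiteLinCoeff (m n k : ℕ) : ℝ :=
  2 ^ k * (k.factorial : ℝ) * (m.choose k : ℝ) * (n.choose k : ℝ)

theorem hermiteLinCoeff_eq_zero_of_min_lt {m n k : ℕ} (h : min m n < k) :
    hermiteLinCoeff m n k = 0 := by
  rcases min_lt_iff.1 h with h | h <;> simp [hermiteLinCoeff, Nat.choose_eq_zero_of_lt h]

theorem hermiteLinCoeff_add_two_add_one (m n j : ℕ) :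
    hermiteLinCoeff (m + 2) n (j + 1) =
      hermiteLinCoeff (m + 1) n (j + 1) +
        2 * ((m : ℝ) + 1 + n - 2 * j) * hermiteLinCoeff (m + 1) n j -
        2 * ((m : ℝ) + 1) * hermiteLinCoeff m n j := by
  have hn := Nat.cast_choose_succ_right_eq (R := ℝ) n j
  have hm := Nat.cast_choose_succ_right_eq (R := ℝ) (m + 1) j
  have hm' : ((m : ℝ) + 1) * m.choose j = (m + 1).choose (j + 1) * (j + 1) := by
    exact_mod_cast Nat.add_one_mul_choose_eq m j
  simp only [hermiteLinCoeff, Nat.choose_succ_succ' (m + 1), Nat.factorial_succ]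
  push_cast at hm ⊢
  linear_combination (2 ^ (j + 1) * j.factorial : ℝ) *
    ((m + 1).choose j * hn + n.choose j * hm' + n.choose j * hm)

noncomputable def hermiteLinSum (m n : ℕ) (x : ℝ) : ℝ :=
  ∑ k ∈ range (min m n + 1), hermiteLinCoeff m n k * physHermite (m + n - 2 * k) x

theorem sum_range_hermiteLinCoeff_mul {m n N : ℕ} (hN : min m n < N) (f : ℕ → ℝ) :
    ∑ k ∈ range N, hermiteLinCoeff m n k * f k =
      ∑ k ∈ range (min m n + 1), hermiteLinCoeff m n k * f k := by
  refine (sum_subset (range_subset_range.2 hN) fun k _ hk => ?_).symm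
  rw [hermiteLinCoeff_eq_zero_of_min_lt (by rw [mem_range] at hk; omega), zero_mul]

theorem hermiteLinSum_eq_sum_range {m n N : ℕ} (hN : min m n < N) (x : ℝ) :
    hermiteLinSum m n x =
      ∑ k ∈ range N, hermiteLinCoeff m n k * physHermite (m + n - 2 * k) x :=
  (sum_range_hermiteLinCoeff_mul hN _).symm

theorem hermiteLinCoeff_mul_two_mul_physHermite (m n k : ℕ) (x : ℝ) :
    hermiteLinCoeff (m + 1) n k * (2 * x * physHermite (m + 1 + n - 2 * k) x) =
      hermiteLinCoeff (m + 1) n k * physHermite (m + 2 + n - 2 * k) x +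
        hermiteLinCoeff (m + 1) n k *
          (2 * ((m : ℝ) + 1 + n - 2 * k) * physHermite (m + n - 2 * k) x) := by
  rcases le_or_gt k (min (m + 1) n) with hk | hk
  · have hk' : 2 * k ≤ m + 1 + n := by omega
    rw [two_mul_mul_physHermite, Nat.cast_sub hk',
      show m + 1 + n - 2 * k + 1 = m + 2 + n - 2 * k by omega,
      show m + 1 + n - 2 * k - 1 = m + n - 2 * k by omega]
    push_cast
    ring
  · simp [hermiteLinCoeff_eq_zero_of_min_lt hk]

theorem hermiteLinSum_zero_left (n : ℕ) (x : ℝ) : hermiteLinSum 0 n x = physHermite n x := by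
  simp [hermiteLinSum, hermiteLinCoeff]

theorem hermiteLinSum_one_left (n : ℕ) (x : ℝ) :
    hermiteLinSum 1 n x = 2 * x * physHermite n x := by
  rw [hermiteLinSum_eq_sum_range (N := 2) (by omega), two_mul_mul_physHermite]
  simp [hermiteLinCoeff, sum_range_succ, add_comm 1 n]

theorem hermiteLinSum_add_two (m n : ℕ) (x : ℝ) :
    hermiteLinSum (m + 2) n x =
      2 * x * hermiteLinSum (m + 1) n x - 2 * (m + 1) * hermiteLinSum m n x := by
  have h₂ := hermiteLinSum_eq_sum_range (m := m + 2) (n := n) (N := m + 3) (by omega) x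
  have h₁ : 2 * x * hermiteLinSum (m + 1) n x =
      ∑ k ∈ range (m + 3), hermiteLinCoeff (m + 1) n k * physHermite (m + 2 + n - 2 * k) x +
      ∑ k ∈ range (m + 2), hermiteLinCoeff (m + 1) n k *
        (2 * ((m : ℝ) + 1 + n - 2 * k) * physHermite (m + n - 2 * k) x) := by
    rw [hermiteLinSum_eq_sum_range (N := m + 3) (by omega), mul_sum,
      sum_range_hermiteLinCoeff_mul (N := m + 2) (by omega),
      ← sum_range_hermiteLinCoeff_mul (N := m + 3) (by omega), ← sum_add_distrib]
    exact sum_congr rfl fun k _ => by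
      rw [mul_left_comm, hermiteLinCoeff_mul_two_mul_physHermite]
  have h₀ := hermiteLinSum_eq_sum_range (m := m) (n := n) (N := m + 2) (by omega) x
  have hshift :
      ∑ k ∈ range (m + 3), (hermiteLinCoeff (m + 2) n k - hermiteLinCoeff (m + 1) n k) *
        physHermite (m + 2 + n - 2 * k) x =
      ∑ k ∈ range (m + 2), hermiteLinCoeff (m + 1) n k *
        (2 * ((m : ℝ) + 1 + n - 2 * k) * physHermite (m + n - 2 * k) x) -
      2 * (m + 1) * ∑ k ∈ range (m + 2), hermiteLinCoeff m n k * physHermite (m + n - 2 * k) x := by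
    have hk₀ : hermiteLinCoeff (m + 2) n 0 = hermiteLinCoeff (m + 1) n 0 := by
      simp [hermiteLinCoeff]
    rw [sum_range_succ', hk₀, sub_self, zero_mul, add_zero, mul_sum, ← sum_sub_distrib]
    refine sum_congr rfl fun k _ => ?_
    rw [hermiteLinCoeff_add_two_add_one, show m + 2 + n - 2 * (k + 1) = m + n - 2 * k by omega]
    ring
  rw [h₂, h₁, h₀]
  simp only [sub_mul, sum_sub_distrib] at hshift
  linear_combination hshift

theorem physHermite_mul_eq_hermiteLinSum (m n : ℕ) (x : ℝ) :
    physHermite m x * physHermite n x = hermiteLinSum m n x := by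
  induction m using Nat.twoStepInduction with
  | zero => rw [hermiteLinSum_zero_left, physHermite, one_mul]
  | one => rw [hermiteLinSum_one_left, physHermite]
  | more m ih₀ ih₁ => rw [hermiteLinSum_add_two, ← ih₁, ← ih₀, physHermite_add_two]; ring

/-- Hermite linearization formula: for all naturals `m`, `n` and every real `x`,
`H_m(x)·H_n(x) = Σ_{k=0}^{min(m,n)} 2^k·k!·C(m,k)·C(n,k)·H_{m+n−2k}(x)`. -/
theorem physHermite_mul (m n : ℕ) (x : ℝ) :
    physHermite m x * physHermite n x =
      ∑ k ∈ range (min m n + 1),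
        2 ^ k * (k.factorial : ℝ) * (m.choose k : ℝ) * (n.choose k : ℝ) *
          physHermite (m + n - 2 * k) x :=
  physHermite_mul_eq_hermiteLinSum m n x
end
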